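/- arXiv:2202.04870 — 5 statements merged into one kernel-verified Lean document; each statement's English description precedes it below -/
import Mathlib

section
/- Let X be a nonempty set contained in a set X̄, let T be a positive integer, and for each t ∈ {1,…,T} let g_t : X → ℝ and ḡ_t : X̄ → ℝ satisfy ḡ_t(x) ≤ g_t(x) for every x ∈ X. Let α ≥ 0 and let A : X̄ → X be a rounding map satisfying g_t(A(x̄)) ≤ α · ḡ_t(x̄) for every x̄ ∈ X̄ and every t. Suppose x̄_1, …, x̄_T ∈ X̄ are such that for some R ≥ 0 and for every x̄ ∈ X̄ one has Σ_{t=1}^T ḡ_t(x̄_t) ≤ R + Σ_{t=1}^T ḡ_t(x̄). Then for every x ∈ X, Σ_{t=1}^T g_t(A(x̄_t)) ≤ α · (R + Σ_{t=1}^T g_t(x)). In particular, an α-approximate rounding applied to the iterates of an online algorithm with regret R for the relaxed problem yields α-approximate regret α·R for the original problem. -/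
/-- Composition of a convex relaxation with an α-approximate rounding:
an online algorithm with regret `R` for the relaxed problem yields α-approximate
regret `α·R` for the original problem. -/
theorem rounding_of_low_regret_relaxation
    {β : Type*} (X Xbar : Set β) (hXne : X.Nonempty) (hsub : X ⊆ Xbar)
    (T : ℕ) (hT : 0 < T)
    (g gbar : Fin T → β → ℝ)
    (hrelax : ∀ t, ∀ x ∈ X, gbar t x ≤ g t x)
    (α : ℝ) (hα : 0 ≤ α)
    (A : β → β) (hA : ∀ x ∈ Xbar, A x ∈ X)
    (hround : ∀ t, ∀ x ∈ Xbar, g t (A x) ≤ α * gbar t x)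
    (xb : Fin T → β) (hxb : ∀ t, xb t ∈ Xbar)
    (R : ℝ) (hR : 0 ≤ R)
    (hregret : ∀ y ∈ Xbar, ∑ t, gbar t (xb t) ≤ R + ∑ t, gbar t y) :
    ∀ x ∈ X, ∑ t, g t (A (xb t)) ≤ α * (R + ∑ t, g t x) := by
  intro x hx
  calc ∑ t, g t (A (xb t)) ≤ ∑ t, α * gbar t (xb t) :=
        Finset.sum_le_sum fun t _ => hround t _ (hxb t)
    _ = α * ∑ t, gbar t (xb t) := (Finset.mul_sum _ _ _).symm
    _ ≤ α * (R + ∑ t, gbar t x) := by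
        exact mul_le_mul_of_nonneg_left (hregret x (hsub hx)) hα
    _ ≤ α * (R + ∑ t, g t x) := by
        apply mul_le_mul_of_nonneg_left _ hα
        gcongr with t
        exact hrelax t x hx
end

section
/- Let n be a positive integer and let p ∈ ℝ^{n×n} have strictly positive entries with Σ_{i=1}^n Σ_{j=1}^n p_{ij} = n (in particular, p may be any doubly stochastic n×n matrix with positive entries). Then for every z ∈ ℝ^{n×n}, Σ_{i,j} z_{ij}² / p_{ij} ≥ (1/n) · (Σ_{i,j} |z_{ij}|)². That is, the Hessian quadratic form of the negative-entropy function U(x) = Σ_{i,j} x_{ij} log x_{ij} at p dominates (1/n) times the square of the ℓ1 norm. -/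
/-- the Hessian quadratic form of the negative entropy at a positive
matrix `p` with total mass `n` dominates `(1/n)` times the square of the ℓ1 norm. -/
theorem entropy_hessian_dominates_l1_sq
    (n : ℕ) (hn : 0 < n) (p : Fin n → Fin n → ℝ)
    (hpos : ∀ i j, 0 < p i j)
    (hsum : ∑ i, ∑ j, p i j = (n : ℝ)) :
    ∀ z : Fin n → Fin n → ℝ,
      (1 / (n : ℝ)) * (∑ i, ∑ j, |z i j|) ^ 2 ≤ ∑ i, ∑ j, (z i j) ^ 2 / p i j := by
  intro z
  have key : (∑ ij : Fin n × Fin n, |z ij.1 ij.2|) ^ 2 ≤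
      (∑ ij : Fin n × Fin n, p ij.1 ij.2) *
        ∑ ij : Fin n × Fin n, (z ij.1 ij.2) ^ 2 / p ij.1 ij.2 := by
    apply Finset.sum_sq_le_sum_mul_sum_of_sq_eq_mul
    · exact fun i _ => (hpos i.1 i.2).le
    · exact fun i _ => div_nonneg (sq_nonneg _) (hpos i.1 i.2).le
    · intro i _
      rw [sq_abs, mul_div_cancel₀ _ (hpos i.1 i.2).ne']
  simp only [Fintype.sum_prod_type] at key
  rw [hsum] at key
  have hn' : (0:ℝ) < n := Nat.cast_pos.mpr hn
  rw [div_mul_eq_mul_div, div_le_iff₀ hn', one_mul]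
  linarith [key]
end

section
/- Let n be a positive integer and let U(x) = Σ_{i=1}^n Σ_{j=1}^n x_{ij} log x_{ij}. Then U is (1/n)-strongly convex with respect to the ℓ1 norm on the set of doubly stochastic n×n matrices with strictly positive entries: for all doubly stochastic matrices x, y with strictly positive entries, U(y) ≥ U(x) + Σ_{i,j} (log x_{ij} + 1)(y_{ij} − x_{ij}) + (1/(2n)) · (Σ_{i,j} |y_{ij} − x_{ij}|)². -/
/-- A doubly stochastic `n × n` matrix: entries in `[0,1]`, all row sums and
column sums equal to `1`. -/
def DoublyStochastic (n : ℕ) (x : Fin n → Fin n → ℝ) : Prop :=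
  (∀ i j, 0 ≤ x i j) ∧ (∀ i j, x i j ≤ 1) ∧
  (∀ i, ∑ j, x i j = 1) ∧ (∀ j, ∑ i, x i j = 1)

/-!
Because `x` and `y` have the same total mass `n`, the Bregman divergence of `U` between them is
the Kullback–Leibler divergence `∑ y (log y - log x)`, so the claim is Pinsker's inequality for
measures of mass `n`. It follows from the scalar bound `3 (t - 1)² ≤ 2 (t + 2) klFun t`
(homogenised: `3 (b - a)² ≤ 2 (b + 2a) (b log (b/a) - b + a)`) and Cauchy–Schwarz in Sedrakyan's
form with the weights `y + 2x`, whose total is `3n`.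
-/

open Real Set InformationTheory

lemma hasDerivAt_add_one_mul_log_sub {t : ℝ} (ht : t ≠ 0) :
    HasDerivAt (fun s ↦ (s + 1) * log s - 2 * (s - 1)) (klFun t / t) t := by
  refine ((((hasDerivAt_id' t).add_const 1).fun_mul (hasDerivAt_log ht)).fun_sub
    (((hasDerivAt_id' t).sub_const 1).const_mul 2)).congr_deriv ?_
  rw [klFun_apply]
  field_simp
  ring

lemma monotoneOn_add_one_mul_log_sub :
    MonotoneOn (fun t ↦ (t + 1) * log t - 2 * (t - 1)) (Ioi 0) := by
  have hderiv := fun t (ht : t ∈ Ioi (0 : ℝ)) ↦ hasDerivAt_add_one_mul_log_sub (ne_of_gt ht)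
  refine monotoneOn_of_hasDerivWithinAt_nonneg (f' := fun t ↦ klFun t / t) (convex_Ioi 0)
    (fun t ht ↦ (hderiv t ht).continuousAt.continuousWithinAt) ?_ ?_ <;>
    rw [interior_Ioi]
  · exact fun t ht ↦ (hderiv t ht).hasDerivWithinAt
  · exact fun t ht ↦ div_nonneg (klFun_nonneg (le_of_lt ht)) (le_of_lt ht)

lemma hasDerivAt_mul_klFun_sub_sq {t : ℝ} (ht : t ≠ 0) :
    HasDerivAt (fun s ↦ 2 * (s + 2) * klFun s - 3 * (s - 1) ^ 2)
      (4 * ((t + 1) * log t - 2 * (t - 1))) t := by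
  refine ((((hasDerivAt_id' t).add_const 2).const_mul 2).fun_mul (hasDerivAt_klFun ht)).fun_sub
    ((((hasDerivAt_id' t).sub_const 1).fun_pow 2).const_mul 3) |>.congr_deriv ?_
  rw [klFun_apply]
  ring

lemma three_mul_sq_sub_one_le_klFun {t : ℝ} (ht : 0 < t) :
    3 * (t - 1) ^ 2 ≤ 2 * (t + 2) * klFun t := by
  have hderiv := fun s (hs : 0 < s) ↦ hasDerivAt_mul_klFun_sub_sq (ne_of_gt hs)
  have hmono := monotoneOn_add_one_mul_log_sub
  have hmin : IsMinOn (fun s ↦ 2 * (s + 2) * klFun s - 3 * (s - 1) ^ 2) (Ioi 0) 1 := by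
    refine isMinOn_Ioi_of_deriv (hderiv 1 one_pos).continuousAt
      (fun s hs ↦ (hderiv s hs.1).differentiableAt.differentiableWithinAt)
      (fun s hs ↦ (hderiv s (one_pos.trans hs)).differentiableAt.differentiableWithinAt)
      (fun s hs ↦ ?_) (fun s hs ↦ ?_)
    · have := hmono hs.1 (mem_Ioi.2 one_pos) hs.2.le
      simp only [log_one] at this
      rw [(hderiv s hs.1).deriv]
      linarith
    · have := hmono (mem_Ioi.2 one_pos) (mem_Ioi.2 (one_pos.trans hs)) hs.le
      simp only [log_one] at this
      rw [(hderiv s (one_pos.trans hs)).deriv]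
      linarith
  have := hmin ht
  simp only [mem_ofPred_eq, klFun_one] at this
  linarith

lemma three_mul_sq_sub_le {a b : ℝ} (ha : 0 < a) (hb : 0 < b) :
    3 * (b - a) ^ 2 ≤ 2 * (b + 2 * a) * (b * (log b - log a) - b + a) := by
  have h := mul_le_mul_of_nonneg_left (three_mul_sq_sub_one_le_klFun (div_pos hb ha))
    (sq_nonneg a)
  rw [klFun_apply, log_div hb.ne' ha.ne'] at h
  have e1 : a ^ 2 * (3 * (b / a - 1) ^ 2) = 3 * (b - a) ^ 2 := by field_simp
  have e2 : a ^ 2 * (2 * (b / a + 2) * (b / a * (log b - log a) + 1 - b / a))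
      = 2 * (b + 2 * a) * (b * (log b - log a) - b + a) := by field_simp; ring
  rwa [e1, e2] at h

lemma sq_sum_abs_sub_div_le {ι : Type*} (s : Finset ι) {p q : ι → ℝ}
    (hp : ∀ i ∈ s, 0 < p i) (hq : ∀ i ∈ s, 0 < q i) :
    (∑ i ∈ s, |q i - p i|) ^ 2 / ∑ i ∈ s, (q i + 2 * p i)
      ≤ 2 / 3 * ∑ i ∈ s, (q i * (log (q i) - log (p i)) - q i + p i) := by
  have hw : ∀ i ∈ s, 0 < q i + 2 * p i := fun i hi ↦ by linarith [hp i hi, hq i hi]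
  calc (∑ i ∈ s, |q i - p i|) ^ 2 / ∑ i ∈ s, (q i + 2 * p i)
      ≤ ∑ i ∈ s, |q i - p i| ^ 2 / (q i + 2 * p i) := Finset.sq_sum_div_le_sum_sq_div s _ hw
    _ ≤ ∑ i ∈ s, 2 / 3 * (q i * (log (q i) - log (p i)) - q i + p i) := by
      refine Finset.sum_le_sum fun i hi ↦ ?_
      rw [sq_abs, div_le_iff₀ (hw i hi)]
      linarith [three_mul_sq_sub_le (hp i hi) (hq i hi)]
    _ = 2 / 3 * ∑ i ∈ s, (q i * (log (q i) - log (p i)) - q i + p i) :=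
      (Finset.mul_sum ..).symm

lemma sq_sum_abs_sub_div_le_of_sum_eq {ι : Type*} [Fintype ι] {p q : ι → ℝ}
    (hp : ∀ i, 0 < p i) (hq : ∀ i, 0 < q i) (hsum : ∑ i, q i = ∑ i, p i) :
    (∑ i, |q i - p i|) ^ 2 / (2 * ∑ i, p i) ≤ ∑ i, q i * (log (q i) - log (p i)) := by
  have h := sq_sum_abs_sub_div_le Finset.univ (fun i _ ↦ hp i) (fun i _ ↦ hq i)
  simp only [Finset.sum_add_distrib, Finset.sum_sub_distrib, ← Finset.mul_sum, hsum] at h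
  calc (∑ i, |q i - p i|) ^ 2 / (2 * ∑ i, p i)
      = 3 / 2 * ((∑ i, |q i - p i|) ^ 2 / (∑ i, p i + 2 * ∑ i, p i)) := by
        rw [show ∑ i, p i + 2 * ∑ i, p i = 3 * ∑ i, p i by ring]; ring
    _ ≤ _ := by linarith

lemma sum_mul_log_add_sum_add_one_mul_sub {ι : Type*} [Fintype ι] {p q : ι → ℝ}
    (hsum : ∑ i, q i = ∑ i, p i) :
    ∑ i, p i * log (p i) + ∑ i, (log (p i) + 1) * (q i - p i) = ∑ i, q i * log (p i) := by
  have h : ∀ i, (log (p i) + 1) * (q i - p i) = q i * log (p i) - p i * log (p i) + (q i - p i) :=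
    fun i ↦ by ring
  simp only [h, Finset.sum_add_distrib, Finset.sum_sub_distrib, hsum]
  ring

theorem entropy_strongly_convex_l1_general
    (n : ℕ) (x y : Fin n → Fin n → ℝ)
    (hx : DoublyStochastic n x) (hy : DoublyStochastic n y)
    (hxpos : ∀ i j, 0 < x i j) (hypos : ∀ i j, 0 < y i j) :
    (∑ i, ∑ j, x i j * Real.log (x i j))
      + (∑ i, ∑ j, (Real.log (x i j) + 1) * (y i j - x i j))
      + (1 / (2 * (n : ℝ))) * (∑ i, ∑ j, |y i j - x i j|) ^ 2
    ≤ ∑ i, ∑ j, y i j * Real.log (y i j) := by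
  have htotal {z : Fin n → Fin n → ℝ} (hz : DoublyStochastic n z) :
      ∑ ij : Fin n × Fin n, z ij.1 ij.2 = n := by
    simp [Fintype.sum_prod_type', hz.2.2.1]
  have hsum := (htotal hy).trans (htotal hx).symm
  have hpinsker := sq_sum_abs_sub_div_le_of_sum_eq
    (fun ij : Fin n × Fin n ↦ hxpos ij.1 ij.2) (fun ij ↦ hypos ij.1 ij.2) hsum
  have hbregman := sum_mul_log_add_sum_add_one_mul_sub hsum
  rw [htotal hx] at hpinsker
  simp only [Fintype.sum_prod_type] at hpinsker hbregman
  simp only [mul_sub, Finset.sum_sub_distrib] at hpinsker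
  rw [hbregman, one_div_mul_eq_div]
  linarith

/-- the negative entropy `U(x) = ∑ x_{ij} log x_{ij}` is
`(1/n)`-strongly convex with respect to the ℓ1 norm on the set of doubly
stochastic matrices with strictly positive entries. -/
theorem entropy_strongly_convex_l1
    (n : ℕ) (hn : 0 < n) (x y : Fin n → Fin n → ℝ)
    (hx : DoublyStochastic n x) (hy : DoublyStochastic n y)
    (hxpos : ∀ i j, 0 < x i j) (hypos : ∀ i j, 0 < y i j) :
    (∑ i, ∑ j, x i j * Real.log (x i j))
      + (∑ i, ∑ j, (Real.log (x i j) + 1) * (y i j - x i j))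
      + (1 / (2 * (n : ℝ))) * (∑ i, ∑ j, |y i j - x i j|) ^ 2
    ≤ ∑ i, ∑ j, y i j * Real.log (y i j) :=
  entropy_strongly_convex_l1_general n x y hx hy hxpos hypos
end

section
/- Let m, k, n be positive integers (with n a real bound on costs), let D be a nonempty set, and for each interval t ∈ {1,…,m} and each index i ∈ {1,…,k} let f_{t,i} : D → [0, n] be a cost function; write f̄_t = (1/k) Σ_{i=1}^k f_{t,i} for the average cost of interval t. Let Ω = {1,…,k}^m with the uniform probability measure, write i_t(ω) = ω_t, and let the strategy at interval t be given by a map x_t : {1,…,k}^{t−1} → D, i.e., the point played at interval t depends only on the indices observed in previous intervals. Then E_ω [ Σ_{t=1}^m f̄_t(x_t(ω_1,…,ω_{t−1})) − inf_{x ∈ D} Σ_{t=1}^m f̄_t(x) ] ≤ E_ω [ Σ_{t=1}^m f_{t,i_t(ω)}(x_t(ω_1,…,ω_{t−1})) − inf_{x ∈ D} Σ_{t=1}^m f_{t,i_t(ω)}(x) ] + n·√m. In words: any online strategy for the random-costs setting (observing one uniformly random function per interval) with expected total regret R incurs expected total regret at most R + n√m in the average-costs setting. -/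
/-!
The average-cost regret and the random-cost regret share their first term: since the point
played at interval `t` does not depend on `ω t`, averaging `f t i` over `i` is the same as
evaluating `f t (ω t)` and averaging over `ω`. For the comparator, the expectation of an infimum
is at most the infimum of the expectations, and the expectation of `∑ t, f t (ω t) d` is the
average cost of `d`.
-/

open Finset Function

namespace Fintype

variable {ι α : Type*} [DecidableEq ι] [Fintype ι] [Fintype α]

theorem sum_sum_eq_card_smul_sum_apply_self {M : Type*} [AddCommMonoid M] (t : ι)
    (F : α → (ι → α) → M) (hF : ∀ a ω b, F a (update ω t b) = F a ω) :
    ∑ ω, ∑ a, F a ω = card α • ∑ ω, F (ω t) ω := by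
  have hswap : Involutive fun p : (ι → α) × α => (update p.1 t p.2, p.1 t) := by
    rintro ⟨ω, a⟩
    simp
  calc ∑ ω, ∑ a, F a ω = ∑ p : (ι → α) × α, F p.2 (update p.1 t p.2) := by
        simp only [sum_prod_type, hF]
    _ = ∑ p : (ι → α) × α, F (p.1 t) p.1 :=
        sum_equiv hswap.toPerm _ _ fun p => by simp
    _ = card α • ∑ ω, F (ω t) ω := by
        rw [sum_prod_type, ← sum_nsmul]
        simp

theorem sum_inv_card_mul_sum_eq_sum_apply_self (t : ι) (F : α → (ι → α) → ℝ)
    (hF : ∀ a ω b, F a (update ω t b) = F a ω) :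
    ∑ ω, (card α : ℝ)⁻¹ * ∑ a, F a ω = ∑ ω, F (ω t) ω := by
  cases isEmpty_or_nonempty α
  · have : IsEmpty (ι → α) := isEmpty_pi.2 ⟨t, ‹_›⟩
    simp
  · rw [← mul_sum, sum_sum_eq_card_smul_sum_apply_self t F hF, nsmul_eq_mul,
      inv_mul_cancel_left₀ (by positivity)]

theorem inv_card_mul_sum_comp_eval (t : ι) (g : α → ℝ) :
    (card (ι → α) : ℝ)⁻¹ * ∑ ω : ι → α, g (ω t) = (card α : ℝ)⁻¹ * ∑ a, g a := by
  cases isEmpty_or_nonempty α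
  · have : IsEmpty (ι → α) := isEmpty_pi.2 ⟨t, ‹_›⟩
    simp
  · have h := sum_sum_eq_card_smul_sum_apply_self t (fun a (_ : ι → α) => g a) fun _ _ _ => rfl
    simp only [sum_const, card_univ, nsmul_eq_mul] at h
    field_simp
    linarith

end Fintype

theorem Finset.sum_ciInf_le_ciInf_sum {Ω D : Type*} [Nonempty D] (s : Finset Ω)
    (g : Ω → D → ℝ) (hg : ∀ ω ∈ s, BddBelow (Set.range (g ω))) :
    ∑ ω ∈ s, ⨅ d, g ω d ≤ ⨅ d, ∑ ω ∈ s, g ω d :=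
  le_ciInf fun d => sum_le_sum fun ω hω => ciInf_le (hg ω hω) d

theorem random_costs_to_average_costs_general
    (m k : ℕ) (n : ℝ) (hn : 0 < n)
    {D : Type*} [Nonempty D]
    (f : Fin m → Fin k → D → ℝ)
    (hf0 : ∀ t i d, 0 ≤ f t i d)
    (x : Fin m → (Fin m → Fin k) → D)
    (hx : ∀ (t : Fin m) (ω ω' : Fin m → Fin k),
      (∀ s, s < t → ω s = ω' s) → x t ω = x t ω') :
    ((Fintype.card (Fin m → Fin k) : ℝ))⁻¹ *
        (∑ ω : Fin m → Fin k, ∑ t, (k : ℝ)⁻¹ * ∑ i, f t i (x t ω))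
      - (⨅ d : D, ∑ t, (k : ℝ)⁻¹ * ∑ i, f t i d)
    ≤ ((Fintype.card (Fin m → Fin k) : ℝ))⁻¹ *
        (∑ ω : Fin m → Fin k,
          ((∑ t, f t (ω t) (x t ω)) - ⨅ d : D, ∑ t, f t (ω t) d))
      + n * Real.sqrt m := by
  set C : ℝ := (Fintype.card (Fin m → Fin k) : ℝ)
  have hplayed : ∑ ω : Fin m → Fin k, ∑ t, (k : ℝ)⁻¹ * ∑ i, f t i (x t ω)
      = ∑ ω : Fin m → Fin k, ∑ t, f t (ω t) (x t ω) := by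
    have h (t : Fin m) : ∑ ω : Fin m → Fin k, (k : ℝ)⁻¹ * ∑ i, f t i (x t ω)
        = ∑ ω : Fin m → Fin k, f t (ω t) (x t ω) := by
      simpa using Fintype.sum_inv_card_mul_sum_eq_sum_apply_self t (fun i ω => f t i (x t ω))
        fun i ω j => congrArg (f t i) (hx t _ _ fun s hs => update_of_ne hs.ne _ _)
    rw [sum_comm, sum_congr rfl fun t _ => h t, sum_comm]
  have hfixed (d : D) : C⁻¹ * ∑ ω : Fin m → Fin k, ∑ t, f t (ω t) d
      = ∑ t, (k : ℝ)⁻¹ * ∑ i, f t i d := by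
    rw [sum_comm, mul_sum]
    refine sum_congr rfl fun t _ => ?_
    have h := Fintype.inv_card_mul_sum_comp_eval t (f t · d)
    rwa [Fintype.card_fin] at h
  have hbdd (ω : Fin m → Fin k) : BddBelow (Set.range fun d => ∑ t, f t (ω t) d) :=
    ⟨0, by rintro _ ⟨d, rfl⟩; exact sum_nonneg fun t _ => hf0 t (ω t) d⟩
  have hbest : C⁻¹ * ∑ ω : Fin m → Fin k, ⨅ d : D, ∑ t, f t (ω t) d
      ≤ ⨅ d : D, ∑ t, (k : ℝ)⁻¹ * ∑ i, f t i d := calc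
    _ ≤ C⁻¹ * ⨅ d : D, ∑ ω : Fin m → Fin k, ∑ t, f t (ω t) d := by
      gcongr
      exact sum_ciInf_le_ciInf_sum _ _ fun ω _ => hbdd ω
    _ = ⨅ d : D, ∑ t, (k : ℝ)⁻¹ * ∑ i, f t i d := by
      rw [Real.mul_iInf_of_nonneg (by positivity)]
      simp_rw [hfixed]
  rw [hplayed, sum_sub_distrib, mul_sub]
  linarith [mul_nonneg hn.le (Real.sqrt_nonneg m)]

/-- Lemma 4.2: any online strategy for the random-costs setting
(one uniformly random function among the `k` functions of each of the `m` intervals,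
the point played at interval `t` depending only on the indices observed before `t`)
incurs, in the average-costs setting, expected total regret at most its expected
total regret in the random-costs setting plus `n √m`. -/
theorem random_costs_to_average_costs
    (m k : ℕ) (hm : 0 < m) (hk : 0 < k) (n : ℝ) (hn : 0 < n)
    {D : Type*} [Nonempty D]
    (f : Fin m → Fin k → D → ℝ)
    (hf0 : ∀ t i d, 0 ≤ f t i d) (hfn : ∀ t i d, f t i d ≤ n)
    (x : Fin m → (Fin m → Fin k) → D)
    (hx : ∀ (t : Fin m) (ω ω' : Fin m → Fin k),
      (∀ s, s < t → ω s = ω' s) → x t ω = x t ω') :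
    ((Fintype.card (Fin m → Fin k) : ℝ))⁻¹ *
        (∑ ω : Fin m → Fin k, ∑ t, (k : ℝ)⁻¹ * ∑ i, f t i (x t ω))
      - (⨅ d : D, ∑ t, (k : ℝ)⁻¹ * ∑ i, f t i d)
    ≤ ((Fintype.card (Fin m → Fin k) : ℝ))⁻¹ *
        (∑ ω : Fin m → Fin k,
          ((∑ t, f t (ω t) (x t ω)) - ⨅ d : D, ∑ t, f t (ω t) d))
      + n * Real.sqrt m :=
  random_costs_to_average_costs_general m k n hn f hf0 x hx
end

section
/- Let n and k be positive integers with k ≤ n, let σ be a permutation of {1,…,n}, and let c ∈ ℝ≥0^n be a vector of box costs for a fixed scenario. Let x^σ ∈ {0,1}^{n×n} be the permutation matrix of σ (x^σ_{it} = 1 iff σ(t) = i), and define the value of the scenario-aware k-selection relaxation at x^σ as V = inf { Σ_{t=1}^n (1 − y_t) + Σ_{i,t} c_i z_{it} : y ∈ [0,1]^n, z ∈ ℝ^{n×n}, z ≥ 0, z_{it} ≤ x^σ_{it} for all i,t, and for every subset A ⊆ {1,…,n} and every t, Σ_{t' ≤ t} Σ_{i ∉ A} z_{it'} ≥ (k −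 |A|) y_t }. Then for every τ ∈ {1,…,n} and every set S ⊆ {σ(1),…,σ(τ)} with |S| = k, one has V ≤ τ + Σ_{i ∈ S} c_i. That is, the relaxation value at any permutation matrix is at most the cost of any scenario-aware partially-adaptive strategy that opens boxes in order σ, stops at time τ, and selects the k boxes S from among those opened. -/
/-!
The strategy is itself a feasible point of the relaxation: select box `σ t` at time `t` exactly
when it belongs to `S`, and declare the scenario covered from time `τ + 1` on. Every box of `S`
is opened by time `τ`, so after that time the boxes of `S` outside any set `A` are all selected,
and there are at least `k - |A|` of them. The objective at this point is exactly the strategy's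
cost, and it bounds the infimum because the objective is bounded below on the feasible region.
-/

open Finset

theorem neg_sum_abs_le_relaxation_objective {ι T : Type*} [Fintype ι] [Fintype T]
    (c : ι → ℝ) (y : T → ℝ) (z : ι → T → ℝ)
    (hy : ∀ t, y t ≤ 1) (hz₀ : ∀ i t, 0 ≤ z i t) (hz₁ : ∀ i t, z i t ≤ 1) :
    -∑ i, ∑ _t : T, |c i| ≤ ∑ t, (1 - y t) + ∑ i, ∑ t, c i * z i t := by
  have hcover : 0 ≤ ∑ t, (1 - y t) := sum_nonneg fun t _ => sub_nonneg.2 (hy t)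
  have hcost : -∑ i, ∑ _t : T, |c i| ≤ ∑ i, ∑ t, c i * z i t := by
    simp only [← sum_neg_distrib]
    refine sum_le_sum fun i _ => sum_le_sum fun t _ => ?_
    calc -|c i| ≤ -|c i * z i t| := by
          rw [abs_mul, abs_of_nonneg (hz₀ i t), neg_le_neg_iff]
          exact mul_le_of_le_one_right (abs_nonneg _) (hz₁ i t)
      _ ≤ c i * z i t := neg_abs_le _
  linarith

theorem card_sub_card_le_sum_compl_indicator {ι : Type*} [Fintype ι] [DecidableEq ι]
    (S A : Finset ι) :
    (#S : ℝ) - #A ≤ ∑ i ∈ Aᶜ, if i ∈ S then 1 else 0 := by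
  have htotal := sum_compl_add_sum A fun i => if i ∈ S then (1 : ℝ) else 0
  have hA : ∑ i ∈ A, (if i ∈ S then (1 : ℝ) else 0) ≤ #A := by
    rw [sum_boole]
    exact_mod_cast card_filter_le _ _
  have hall : ∑ i, (if i ∈ S then (1 : ℝ) else 0) = #S := by
    rw [sum_boole]
    simp
  linarith

section CoveredAfter

variable {T : Type*} [LinearOrder T]

def coveredAfter (τ t : T) : ℝ := if τ < t then 1 else 0

theorem coveredAfter_mem_Icc (τ t : T) : coveredAfter τ t ∈ Set.Icc 0 1 := by
  unfold coveredAfter; split_ifs <;> norm_num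

theorem sum_one_sub_coveredAfter [Fintype T] [LocallyFiniteOrderBot T] (τ : T) :
    ∑ t, (1 - coveredAfter τ t) = #(Iic τ) := by
  simp only [coveredAfter, sub_ite, sub_self, sub_zero, ← not_le, ite_not]
  rw [sum_boole, filter_ge_eq_Iic]

end CoveredAfter

section SelectionMatrix

variable {ι T : Type*} [DecidableEq ι] (σ : T ≃ ι) (S : Finset ι)

def selectionMatrix (i : ι) (t : T) : ℝ := if σ t = i ∧ i ∈ S then 1 else 0

theorem selectionMatrix_nonneg (i : ι) (t : T) : 0 ≤ selectionMatrix σ S i t := by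
  unfold selectionMatrix; split_ifs <;> norm_num

theorem selectionMatrix_le_openingMatrix (i : ι) (t : T) :
    selectionMatrix σ S i t ≤ if σ t = i then 1 else 0 := by
  unfold selectionMatrix; split_ifs <;> simp_all

variable [Fintype ι] [Fintype T]

theorem sum_selectionMatrix (i : ι) :
    ∑ t, selectionMatrix σ S i t = if i ∈ S then 1 else 0 := by
  rw [← σ.symm.sum_comp]
  by_cases hi : i ∈ S <;> simp [selectionMatrix, hi]

theorem sum_sum_mul_selectionMatrix (c : ι → ℝ) :
    ∑ i, ∑ t, c i * selectionMatrix σ S i t = ∑ i ∈ S, c i := by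
  simp only [← mul_sum, sum_selectionMatrix, mul_ite, mul_one, mul_zero, sum_ite_mem, univ_inter]

variable [LinearOrder T] [LocallyFiniteOrderBot T]

theorem sum_Iic_sum_selectionMatrix {t : T} (hS : ∀ i ∈ S, σ.symm i ≤ t) (B : Finset ι) :
    ∑ t' ∈ Iic t, ∑ i ∈ B, selectionMatrix σ S i t' = ∑ i ∈ B, if i ∈ S then 1 else 0 := by
  have hlate : ∀ t' ∉ Iic t, ∀ i, selectionMatrix σ S i t' = 0 := by
    intro t' ht' i
    refine if_neg fun ⟨hσ, hi⟩ => ht' (mem_Iic.2 ?_)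
    simpa [← hσ] using hS i hi
  rw [sum_subset (subset_univ _) fun t' _ ht' => sum_eq_zero fun i _ => hlate t' ht' i,
    sum_comm]
  exact sum_congr rfl fun i _ => sum_selectionMatrix σ S i

theorem card_sub_card_mul_coveredAfter_le_sum_selectionMatrix {τ : T}
    (hS : ∀ i ∈ S, σ.symm i ≤ τ) (A : Finset ι) (t : T) :
    ((#S : ℝ) - #A) * coveredAfter τ t ≤ ∑ t' ∈ Iic t, ∑ i ∈ Aᶜ, selectionMatrix σ S i t' := by
  unfold coveredAfter
  split_ifs with hτt
  · rw [mul_one, sum_Iic_sum_selectionMatrix σ S fun i hi => (hS i hi).trans hτt.le]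
    exact card_sub_card_le_sum_compl_indicator S A
  · rw [mul_zero]
    exact sum_nonneg fun t' _ => sum_nonneg fun i _ => selectionMatrix_nonneg σ S i t'

end SelectionMatrix

theorem k_selection_relaxation_le_strategy_cost_general
    (n k : ℕ)
    (σ : Equiv.Perm (Fin n)) (c : Fin n → ℝ)
    (V : ℝ)
    (hV : V = sInf {v : ℝ | ∃ (y : Fin n → ℝ) (z : Fin n → Fin n → ℝ),
      (∀ t : Fin n, 0 ≤ y t ∧ y t ≤ 1) ∧
      (∀ (i t : Fin n), 0 ≤ z i t) ∧
      (∀ (i t : Fin n), z i t ≤ (if σ t = i then (1 : ℝ) else 0)) ∧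
      (∀ (A : Finset (Fin n)) (t : Fin n),
        ((k : ℝ) - (A.card : ℝ)) * y t ≤ ∑ t' ∈ Finset.Iic t, ∑ i ∈ Aᶜ, z i t') ∧
      v = (∑ t : Fin n, (1 - y t)) + ∑ i : Fin n, ∑ t : Fin n, c i * z i t}) :
    ∀ (τ : Fin n) (S : Finset (Fin n)),
      S ⊆ (Finset.Iic τ).image σ → S.card = k →
      V ≤ ((τ : ℝ) + 1) + ∑ i ∈ S, c i := by
  intro τ S hS hScard
  subst hV hScard
  have hopened : ∀ i ∈ S, σ.symm i ≤ τ := fun i hi => by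
    obtain ⟨t, ht, rfl⟩ := mem_image.1 (hS hi)
    simpa using ht
  refine csInf_le ⟨-∑ i, ∑ _t : Fin n, |c i|, ?_⟩ ⟨coveredAfter τ, selectionMatrix σ S,
    coveredAfter_mem_Icc τ, selectionMatrix_nonneg σ S, selectionMatrix_le_openingMatrix σ S,
    card_sub_card_mul_coveredAfter_le_sum_selectionMatrix σ S hopened, ?_⟩
  · rintro v ⟨y, z, hy, hz₀, hz₁, -, rfl⟩
    exact neg_sum_abs_le_relaxation_objective c y z (fun t => (hy t).2) hz₀
      fun i t => (hz₁ i t).trans (by split_ifs <;> norm_num)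
  · rw [sum_sum_mul_selectionMatrix, sum_one_sub_coveredAfter, Fin.card_Iic]
    push_cast
    rfl

/-- the value of the scenario-aware `k`-selection relaxation
(Relaxation-SPA-k), evaluated at the permutation matrix of `σ` (box `σ t` is
opened at time `t+1`, times being `1, …, n`), is at most the cost
`τ + ∑_{i ∈ S} c_i` of any scenario-aware partially-adaptive strategy that
opens boxes in order `σ`, stops at time `τ`, and selects `k` opened boxes `S`. -/
theorem k_selection_relaxation_le_strategy_cost
    (n k : ℕ) (hn : 0 < n) (hk : 0 < k) (hkn : k ≤ n)
    (σ : Equiv.Perm (Fin n)) (c : Fin n → ℝ) (hc : ∀ i, 0 ≤ c i)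
    (V : ℝ)
    (hV : V = sInf {v : ℝ | ∃ (y : Fin n → ℝ) (z : Fin n → Fin n → ℝ),
      (∀ t : Fin n, 0 ≤ y t ∧ y t ≤ 1) ∧
      (∀ (i t : Fin n), 0 ≤ z i t) ∧
      (∀ (i t : Fin n), z i t ≤ (if σ t = i then (1 : ℝ) else 0)) ∧
      (∀ (A : Finset (Fin n)) (t : Fin n),
        ((k : ℝ) - (A.card : ℝ)) * y t ≤ ∑ t' ∈ Finset.Iic t, ∑ i ∈ Aᶜ, z i t') ∧
      v = (∑ t : Fin n, (1 - y t)) + ∑ i : Fin n, ∑ t : Fin n, c i * z i t}) :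
    ∀ (τ : Fin n) (S : Finset (Fin n)),
      S ⊆ (Finset.Iic τ).image σ → S.card = k →
      V ≤ ((τ : ℝ) + 1) + ∑ i ∈ S, c i :=
  k_selection_relaxation_le_strategy_cost_general n k σ c V hV
end
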